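/- Let $n \geq 2$ and let $U$ be the group of unipotent upper triangular $n\times n$ complex matrices. Consider $U \times U$ acting on triples of upper triangular matrices by $(u,v).(A_1,A_2,A_3) = (uA_1v^{-1}, uA_2v^{-1}, uA_3v^{-1})$. Then there exists a $(U\times U)$-invariant polynomial function on $\mathfrak{b}^{\oplus 3}$ that does not depend only on the diagonal entries of $A_1, A_2, A_3$: namely $g(A_1,A_2,A_3) = (a_{11}b_{22}-a_{22}b_{11})c_{12} + (c_{11}a_{22}-c_{22}a_{11})b_{12} + (b_{11}c_{22}-b_{22}c_{11})a_{12}$, where $A_1=(a_{ij})$, $A_2=(b_{ij})$, $A_3=(c_{ij})$, is invariant but is not a polynomial in the diagonal coordinates alone. -/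
import Mathlib

open Matrix Finset

private lemma sum_one' {n : ℕ} (i0 : Fin n) (f : Fin n → ℂ)
    (hf : ∀ k : Fin n, k ≠ i0 → f k = 0) :
    ∑ k, f k = f i0 := by
  apply Finset.sum_eq_single
  · intro k _ hk; exact hf k hk
  · intro h; exact absurd (Finset.mem_univ _) h

private lemma sum_two' {n : ℕ} (i0 i1 : Fin n) (hne : i0 ≠ i1) (f : Fin n → ℂ)
    (hf : ∀ k : Fin n, k ≠ i0 → k ≠ i1 → f k = 0) :
    ∑ k, f k = f i0 + f i1 := by
  rw [← Finset.sum_pair hne]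
  refine (Finset.sum_subset (Finset.subset_univ _) ?_).symm
  intro k _ hk
  simp only [Finset.mem_insert, Finset.mem_singleton, not_or] at hk
  exact hf k hk.1 hk.2

/-- Column 0 of a product with an upper triangular right factor. -/
private lemma colw0 {n : ℕ} (i0 : Fin n) (hmin : ∀ k : Fin n, k ≠ i0 → i0 < k)
    (X w : Matrix (Fin n) (Fin n) ℂ) (hw : ∀ i j : Fin n, j < i → w i j = 0)
    (i : Fin n) : (X * w) i i0 = X i i0 * w i0 i0 := by
  rw [Matrix.mul_apply]
  apply sum_one' i0
  intro k hk
  rw [hw k i0 (hmin k hk), mul_zero]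

private lemma colw1 {n : ℕ} (i0 i1 : Fin n) (hne : i0 ≠ i1)
    (hnext : ∀ k : Fin n, k ≠ i0 → k ≠ i1 → i1 < k)
    (X w : Matrix (Fin n) (Fin n) ℂ) (hw : ∀ i j : Fin n, j < i → w i j = 0)
    (i : Fin n) : (X * w) i i1 = X i i0 * w i0 i1 + X i i1 * w i1 i1 := by
  rw [Matrix.mul_apply]
  apply sum_two' i0 i1 hne
  intro k hk0 hk1
  rw [hw k i1 (hnext k hk0 hk1), mul_zero]

/-- Product of upper triangular matrices is upper triangular. -/
private lemma mul_tri {n : ℕ} (A w : Matrix (Fin n) (Fin n) ℂ)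
    (hA : ∀ i j : Fin n, j < i → A i j = 0)
    (hw : ∀ i j : Fin n, j < i → w i j = 0) :
    ∀ i j : Fin n, j < i → (A * w) i j = 0 := by
  intro i j hij
  rw [Matrix.mul_apply]
  apply Finset.sum_eq_zero
  intro k _
  rcases le_or_gt k j with hk | hk
  · rw [hA i k (lt_of_le_of_lt hk hij), zero_mul]
  · rw [hw k j hk, mul_zero]

private lemma entries {n : ℕ} (i0 i1 : Fin n) (hne : i0 ≠ i1) (h01 : i0 < i1)
    (hmin : ∀ k : Fin n, k ≠ i0 → i0 < k)
    (hnext : ∀ k : Fin n, k ≠ i0 → k ≠ i1 → i1 < k)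
    (u A w : Matrix (Fin n) (Fin n) ℂ)
    (hu : ∀ i j : Fin n, j < i → u i j = 0) (hud : ∀ i, u i i = 1)
    (hA : ∀ i j : Fin n, j < i → A i j = 0)
    (hw : ∀ i j : Fin n, j < i → w i j = 0)
    (hw0 : w i0 i0 = 1) (hw1 : w i1 i1 = 1) :
    (u * A * w) i0 i0 = A i0 i0 ∧
    (u * A * w) i1 i1 = A i1 i1 ∧
    (u * A * w) i0 i1 =
      A i0 i1 + A i0 i0 * w i0 i1 + u i0 i1 * A i1 i1 := by
  have hN := mul_tri A w hA hw
  have e0 : ∀ i, (A * w) i i0 = A i i0 * w i0 i0 := colw0 i0 hmin A w hw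
  have e1 : ∀ i, (A * w) i i1 = A i i0 * w i0 i1 + A i i1 * w i1 i1 :=
    colw1 i0 i1 hne hnext A w hw
  have f0 : (u * (A * w)) i0 i0 = (A * w) i0 i0 := by
    rw [colw0 i0 hmin u (A * w) hN, hud]
    · ring
  have f1 : (u * (A * w)) i1 i1 = u i1 i0 * (A * w) i0 i1 + (A * w) i1 i1 := by
    rw [colw1 i0 i1 hne hnext u (A * w) hN, hud]
    ring
  have f01 : (u * (A * w)) i0 i1 = (A * w) i0 i1 + u i0 i1 * (A * w) i1 i1 := by
    rw [colw1 i0 i1 hne hnext u (A * w) hN, hud]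
    ring
  rw [Matrix.mul_assoc]
  refine ⟨?_, ?_, ?_⟩
  · rw [f0, e0, hw0]; ring
  · rw [f1, hu i1 i0 h01, e1 i1, hA i1 i0 h01, hw1]; ring
  · rw [f01, e1 i0, e1 i1, hA i1 i0 h01, hw1]; ring

theorem stmt14 {n : ℕ} (hn : 2 ≤ n) :
    let i0 : Fin n := ⟨0, by omega⟩
    let i1 : Fin n := ⟨1, by omega⟩
    let g : Matrix (Fin n) (Fin n) ℂ → Matrix (Fin n) (Fin n) ℂ →
        Matrix (Fin n) (Fin n) ℂ → ℂ := fun A B C =>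
      (A i0 i0 * B i1 i1 - A i1 i1 * B i0 i0) * C i0 i1
        + (C i0 i0 * A i1 i1 - C i1 i1 * A i0 i0) * B i0 i1
        + (B i0 i0 * C i1 i1 - B i1 i1 * C i0 i0) * A i0 i1
    (∀ u v A₁ A₂ A₃ : Matrix (Fin n) (Fin n) ℂ,
      (∀ i j : Fin n, j < i → u i j = 0) → (∀ i : Fin n, u i i = 1) →
      (∀ i j : Fin n, j < i → v i j = 0) → (∀ i : Fin n, v i i = 1) →
      (∀ i j : Fin n, j < i → A₁ i j = 0) →
      (∀ i j : Fin n, j < i → A₂ i j = 0) →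
      (∀ i j : Fin n, j < i → A₃ i j = 0) →
      g (u * A₁ * v⁻¹) (u * A₂ * v⁻¹) (u * A₃ * v⁻¹) = g A₁ A₂ A₃) ∧
    ¬ ∃ h : MvPolynomial (Fin 3 × Fin n) ℂ,
        ∀ A₁ A₂ A₃ : Matrix (Fin n) (Fin n) ℂ,
          (∀ i j : Fin n, j < i → A₁ i j = 0) →
          (∀ i j : Fin n, j < i → A₂ i j = 0) →
          (∀ i j : Fin n, j < i → A₃ i j = 0) →
          g A₁ A₂ A₃ = MvPolynomial.eval
            (fun q : Fin 3 × Fin n => ![A₁, A₂, A₃] q.1 q.2 q.2) h := by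
  intro i0 i1 g
  have hne : i0 ≠ i1 := by simp [i0, i1, Fin.ext_iff]
  have h01 : i0 < i1 := by simp [i0, i1, Fin.lt_def]
  have hmin : ∀ k : Fin n, k ≠ i0 → i0 < k := by
    intro k hk
    simp only [i0, Ne, Fin.ext_iff] at hk
    simp only [i0, Fin.lt_def]
    omega
  have hnext : ∀ k : Fin n, k ≠ i0 → k ≠ i1 → i1 < k := by
    intro k hk0 hk1
    simp only [i0, i1, Ne, Fin.ext_iff] at hk0 hk1
    simp only [i1, Fin.lt_def]
    omega
  constructor
  · intro u v A₁ A₂ A₃ hu hud hv hvd h1 h2 h3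
    -- v is invertible with det 1
    have hvdet : v.det = 1 := by
      rw [Matrix.det_of_upperTriangular (fun i j hij => hv i j hij)]
      simp [hvd]
    have hvu : IsUnit v.det := by rw [hvdet]; exact isUnit_one
    haveI : Invertible v := v.invertibleOfIsUnitDet hvu
    have hw : ∀ i j : Fin n, j < i → v⁻¹ i j = 0 := fun i j hij =>
      (Matrix.blockTriangular_inv_of_blockTriangular
        (fun i j (hij : (j : Fin n) < i) => hv i j hij)) hij
    have hvw : v * v⁻¹ = 1 := Matrix.mul_nonsing_inv v hvu
    have hw00 : v⁻¹ i0 i0 = 1 := by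
      have := colw0 i0 hmin v v⁻¹ hw i0
      rw [hvw, Matrix.one_apply_eq, hvd] at this
      linear_combination -this
    have hw11 : v⁻¹ i1 i1 = 1 := by
      have := colw1 i0 i1 hne hnext v v⁻¹ hw i1
      rw [hvw, Matrix.one_apply_eq, hv i1 i0 h01, hvd] at this
      linear_combination -this
    have hw01 : v⁻¹ i0 i1 = - v i0 i1 := by
      have := colw1 i0 i1 hne hnext v v⁻¹ hw i0
      rw [hvw, Matrix.one_apply_ne hne, hvd, hw11] at this
      linear_combination -this
    obtain ⟨e1a, e1b, e1c⟩ := entries i0 i1 hne h01 hmin hnext u A₁ v⁻¹ hu hud h1 hw hw00 hw11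
    obtain ⟨e2a, e2b, e2c⟩ := entries i0 i1 hne h01 hmin hnext u A₂ v⁻¹ hu hud h2 hw hw00 hw11
    obtain ⟨e3a, e3b, e3c⟩ := entries i0 i1 hne h01 hmin hnext u A₃ v⁻¹ hu hud h3 hw hw00 hw11
    simp only [g, e1a, e1b, e1c, e2a, e2b, e2c, e3a, e3b, e3c]
    ring
  · rintro ⟨h, H⟩
    set A : Matrix (Fin n) (Fin n) ℂ := Matrix.of fun i j => if i = i0 ∧ j = i0 then 1 else 0 with hA
    set B : Matrix (Fin n) (Fin n) ℂ := Matrix.of fun i j => if i = i1 ∧ j = i1 then 1 else 0 with hB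
    set C : Matrix (Fin n) (Fin n) ℂ := Matrix.of fun i j => if i = i0 ∧ j = i1 then 1 else 0 with hC
    have htriA : ∀ i j : Fin n, j < i → A i j = 0 := by
      intro i j hij
      simp only [hA, Matrix.of_apply, ite_eq_right_iff, and_imp]
      intro e1 e2; exfalso; rw [e1, e2] at hij; exact lt_irrefl _ hij
    have htriB : ∀ i j : Fin n, j < i → B i j = 0 := by
      intro i j hij
      simp only [hB, Matrix.of_apply, ite_eq_right_iff, and_imp]
      intro e1 e2; exfalso; rw [e1, e2] at hij; exact lt_irrefl _ hij
    have htriC : ∀ i j : Fin n, j < i → C i j = 0 := by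
      intro i j hij
      simp only [hC, Matrix.of_apply, ite_eq_right_iff, and_imp]
      intro e1 e2; exfalso; rw [e1, e2] at hij; exact absurd hij (not_lt.mpr h01.le)
    have htri0 : ∀ i j : Fin n, j < i → (0 : Matrix (Fin n) (Fin n) ℂ) i j = 0 := by
      intro i j _; rfl
    have hCdiag : ∀ i : Fin n, C i i = 0 := by
      intro i
      simp only [hC, Matrix.of_apply, ite_eq_right_iff, and_imp]
      intro e1 e2; exact absurd (e1.symm.trans e2) hne
    have key : (fun q : Fin 3 × Fin n => ![A, B, C] q.1 q.2 q.2)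
        = (fun q : Fin 3 × Fin n => ![A, B, (0 : Matrix (Fin n) (Fin n) ℂ)] q.1 q.2 q.2) := by
      funext q
      obtain ⟨p, j⟩ := q
      fin_cases p <;> simp [hCdiag]
    have H1 := H A B C htriA htriB htriC
    have H2 := H A B 0 htriA htriB htri0
    rw [key] at H1
    rw [← H2] at H1
    have hg1 : g A B C = 1 := by
      simp [g, hA, hB, hC, hne, hne.symm, Matrix.of_apply]
    have hg2 : g A B 0 = 0 := by
      simp [g]
    rw [hg1, hg2] at H1
    exact one_ne_zero H1
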